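/- arXiv:2304.01761 — 3 statements merged into one kernel-verified Lean document; each statement's English description precedes it below -/
import Mathlib

section
/- The set of unitary elements of a unital C*-algebra A is complete with respect to the metric d_U(u,v) := inf over unitaries w of ‖wuw* − v‖; in particular, every d_U-Cauchy sequence of unitaries has a subsequence realized (after conjugation) as a norm-Cauchy sequence, and the d_U-limit is a unitary of A. -/
/-!
Pass to a subsequence with `d_U(u_{φ n}, u_{φ (n+1)}) < 2⁻ⁿ` and pick unitaries `z_n` realising
these bounds up to the infimum. Conjugating `u_{φ n}` by the products `w_n = z₀* ⋯ z_{n-1}*`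
turns each step into a genuine norm estimate `‖w_n u_{φ n} w_n* - w_{n+1} u_{φ (n+1)} w_{n+1}*‖ < 2⁻ⁿ`,
since conjugation by a unitary is isometric. The conjugated sequence is therefore norm-Cauchy; its
limit is unitary because the unitary group is closed, and it is a `d_U`-limit of the whole sequence
because `d_U` is dominated by the norm distance and satisfies the triangle inequality.
-/

/-- The pseudometric `d_U(u,v) = inf_w ‖w u w* − v‖` on the unitary group. -/
noncomputable def dU {A : Type*} [CStarAlgebra A] (u v : unitary A) : ℝ :=
  ⨅ w : unitary A, ‖(w : A) * (u : A) * star (w : A) - (v : A)‖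

open Filter Topology

section

variable {A : Type*} [CStarAlgebra A]

lemma norm_unitary_conj (w : unitary A) (a : A) : ‖(w : A) * a * star (w : A)‖ = ‖a‖ := by
  rw [← Unitary.coe_star, CStarRing.norm_mul_coe_unitary, CStarRing.norm_coe_unitary_mul]

lemma unitary_mul_conj_sub_conj (w z : unitary A) (a b : A) :
    ((w * z : unitary A) : A) * a * star ((w * z : unitary A) : A) - (w : A) * b * star (w : A) =
      (w : A) * ((z : A) * a * star (z : A) - b) * star (w : A) := by
  simp only [Submonoid.coe_mul, star_mul]
  noncomm_ring

lemma dU_le (u v w : unitary A) : dU u v ≤ ‖(w : A) * (u : A) * star (w : A) - (v : A)‖ :=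
  ciInf_le ⟨0, by rintro x ⟨w, rfl⟩; positivity⟩ w

lemma dU_nonneg (u v : unitary A) : 0 ≤ dU u v :=
  le_ciInf fun _ => norm_nonneg _

lemma exists_norm_conj_sub_lt_of_dU_lt {u v : unitary A} {ε : ℝ} (h : dU u v < ε) :
    ∃ w : unitary A, ‖(w : A) * (u : A) * star (w : A) - (v : A)‖ < ε :=
  exists_lt_of_ciInf_lt h

lemma dU_triangle (u v x : unitary A) : dU u x ≤ dU u v + dU v x := by
  have key : ∀ y z : unitary A, dU u x ≤
      ‖(y : A) * u * star (y : A) - v‖ + ‖(z : A) * v * star (z : A) - x‖ := fun y z =>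
    calc dU u x ≤ ‖((z * y : unitary A) : A) * u * star ((z * y : unitary A) : A) - x‖ :=
          dU_le u x (z * y)
      _ = ‖(z : A) * ((y : A) * u * star (y : A) - v) * star (z : A)
            + ((z : A) * v * star (z : A) - x)‖ := by
          rw [← unitary_mul_conj_sub_conj, sub_add_sub_cancel]
      _ ≤ _ := by grw [norm_add_le, norm_unitary_conj]
  have hv : ∀ z : unitary A, dU u x - ‖(z : A) * v * star (z : A) - x‖ ≤ dU u v := fun z =>
    le_ciInf fun y => by linarith [key y z]
  have : dU u x - dU u v ≤ dU v x := le_ciInf fun z => by linarith [hv z]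
  linarith

lemma exists_conj_norm_sub_succ_lt {u : ℕ → unitary A} {ε : ℕ → ℝ}
    (h : ∀ n, dU (u n) (u (n + 1)) < ε n) :
    ∃ w : ℕ → unitary A, ∀ n,
      ‖(w n : A) * u n * star (w n : A) - (w (n + 1) : A) * u (n + 1) * star (w (n + 1) : A)‖
        < ε n := by
  choose z hz using fun n => exists_norm_conj_sub_lt_of_dU_lt (h n)
  let w : ℕ → unitary A := fun n => Nat.rec 1 (fun k wk => wk * star (z k)) n
  have hw : ∀ n, w n = w (n + 1) * z n := fun n => by simp [w, mul_assoc]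
  refine ⟨w, fun n => ?_⟩
  rw [hw n, unitary_mul_conj_sub_conj, norm_unitary_conj]
  exact hz n

lemma tendsto_dU_of_cauchy_of_subseq {u : ℕ → unitary A} {v : unitary A} {φ : ℕ → ℕ}
    (hcauchy : ∀ ε > (0 : ℝ), ∃ N, ∀ m ≥ N, ∀ n ≥ N, dU (u m) (u n) < ε) (hφ : StrictMono φ)
    (hv : Tendsto (fun k => dU (u (φ k)) v) atTop (𝓝 0)) :
    Tendsto (fun n => dU (u n) v) atTop (𝓝 0) := by
  rw [Metric.tendsto_atTop] at hv ⊢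
  intro ε hε
  obtain ⟨N, hN⟩ := hcauchy (ε / 2) (by positivity)
  obtain ⟨K, hK⟩ := hv (ε / 2) (by positivity)
  have hk : N ≤ φ (max K N) := (le_max_right K N).trans hφ.le_apply
  refine ⟨N, fun n hn => ?_⟩
  have hfar := hK (max K N) (le_max_left K N)
  rw [Real.dist_0_eq_abs, abs_of_nonneg (dU_nonneg _ _)] at hfar ⊢
  linarith [dU_triangle (u n) (u (φ (max K N))) v, hN n hn _ hk]

end

lemma exists_strictMono_lt_of_cauchy {d : ℕ → ℕ → ℝ}
    (h : ∀ ε > (0 : ℝ), ∃ N, ∀ m ≥ N, ∀ n ≥ N, d m n < ε) {ε : ℕ → ℝ} (hε : ∀ n, 0 < ε n) :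
    ∃ φ : ℕ → ℕ, StrictMono φ ∧ ∀ n, d (φ n) (φ (n + 1)) < ε n := by
  obtain ⟨φ, hφ, hφε⟩ := extraction_forall_of_eventually' (P := fun n k => ∀ m ≥ k, d k m < ε n)
    fun n => (h _ (hε n)).imp fun N hN k hk m hm => hN k hk m (hk.trans hm)
  exact ⟨φ, hφ, fun n => hφε n _ (hφ n.lt_succ_self).le⟩

/-- The unitary group of a unital C*-algebra is complete for `d_U`: every `d_U`-Cauchy
sequence has a `d_U`-limit which is a unitary, and a subsequence which, after
conjugation, is norm-Cauchy. -/
theorem unitary_complete_dU (A : Type*) [CStarAlgebra A] (u : ℕ → unitary A)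
    (hcauchy : ∀ ε > (0 : ℝ), ∃ N, ∀ m ≥ N, ∀ n ≥ N, dU (u m) (u n) < ε) :
    (∃ v : unitary A, Filter.Tendsto (fun n => dU (u n) v) Filter.atTop (nhds 0)) ∧
      ∃ φ : ℕ → ℕ, StrictMono φ ∧ ∃ w : ℕ → unitary A,
        CauchySeq fun n => (w n : A) * (u (φ n) : A) * star (w n : A) := by
  obtain ⟨φ, hφ, hstep⟩ := exists_strictMono_lt_of_cauchy hcauchy
    (ε := fun n => (1 / 2 : ℝ) ^ n) fun n => by positivity
  obtain ⟨w, hw⟩ := exists_conj_norm_sub_succ_lt hstep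
  set V : ℕ → A := fun n => (w n : A) * (u (φ n) : A) * star (w n : A)
  have hV : CauchySeq V := cauchySeq_of_le_geometric (1 / 2) 1 (by norm_num) fun n => by
    rw [dist_eq_norm, one_mul]; exact (hw n).le
  obtain ⟨L, hL⟩ := cauchySeq_tendsto_of_complete hV
  have hLu : L ∈ unitary A := isClosed_unitary.mem_of_tendsto hL <|
    Eventually.of_forall fun n => (w n * u (φ n) * star (w n)).prop
  have hdU : Tendsto (fun k => dU (u (φ k)) ⟨L, hLu⟩) atTop (𝓝 0) :=
    squeeze_zero (fun _ => dU_nonneg _ _) (fun k => dU_le _ _ (w k))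
      (tendsto_iff_norm_sub_tendsto_zero.mp hL)
  exact ⟨⟨⟨L, hLu⟩, tendsto_dU_of_cauchy_of_subseq hcauchy hφ hdU⟩, φ, hφ, w, hV⟩
end

section
/- Let X be the spectrum of a positive element a in a C*-algebra with tracial state τ, and let μ_a be the Borel measure on X∖{0} representing the state f ↦ τ(f(a)) via the Riesz representation theorem. Then for every nonnegative f ∈ C₀(X∖{0}), the limit over n of τ(f(a)^{1/n}) equals μ_a(supp f), i.e. the dimension function d_τ([f(a)]) equals the measure of the open support of f. -/
/-!
By the representing measure, `τ(f(a)^{1/n}) = ∫ f^{1/n} dμ`. The `n`-th roots `f^{1/n}` converge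
pointwise to the indicator of `{f ≠ 0}` and are bounded by `max C 1`, where `C` bounds `f` on the
compact spectrum carrying `μ`; dominated convergence then gives `μ {f ≠ 0}`.
-/

open MeasureTheory Filter Topology

namespace Real

theorem tendsto_rpow_inv_natCast_indicator {x : ℝ} (hx : 0 ≤ x) :
    Tendsto (fun n : ℕ => x ^ (n : ℝ)⁻¹) atTop (𝓝 ({y : ℝ | y ≠ 0}.indicator 1 x)) := by
  have h_inv : Tendsto (fun n : ℕ => (n : ℝ)⁻¹) atTop (𝓝 0) :=
    tendsto_inv_atTop_zero.comp tendsto_natCast_atTop_atTop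
  rcases hx.eq_or_lt with rfl | hx_pos
  · rw [Set.indicator_of_notMem (by simp)]
    refine tendsto_const_nhds.congr' ?_
    filter_upwards [eventually_ge_atTop 1] with n hn
    rw [Real.zero_rpow (by positivity)]
  · rw [Set.indicator_of_mem hx_pos.ne', Pi.one_apply]
    simpa [Function.comp_def] using (Real.continuousAt_const_rpow hx_pos.ne').tendsto.comp h_inv

theorem rpow_le_max_one {x M p : ℝ} (hx : 0 ≤ x) (hxM : x ≤ M) (hp0 : 0 ≤ p) (hp1 : p ≤ 1) :
    x ^ p ≤ max M 1 :=
  calc x ^ p ≤ (max M 1) ^ p := Real.rpow_le_rpow hx (hxM.trans (le_max_left _ _)) hp0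
    _ ≤ (max M 1) ^ (1 : ℝ) := Real.rpow_le_rpow_of_exponent_le (le_max_right _ _) hp1
    _ = max M 1 := Real.rpow_one _

end Real

theorem tendsto_integral_rpow_inv_natCast {α : Type*} [MeasurableSpace α] {μ : Measure α}
    [IsFiniteMeasure μ] {f : α → ℝ} {C : ℝ} (hf : Measurable f) (hf_nonneg : ∀ x, 0 ≤ f x)
    (hf_le : ∀ᵐ x ∂μ, f x ≤ C) :
    Tendsto (fun n : ℕ => ∫ x, f x ^ (n : ℝ)⁻¹ ∂μ) atTop (𝓝 (μ.real {x | f x ≠ 0})) := by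
  have h_limit : ∫ x, {y : ℝ | y ≠ 0}.indicator 1 (f x) ∂μ = μ.real {x | f x ≠ 0} := by
    have h_comp : (fun x => {y : ℝ | y ≠ 0}.indicator (1 : ℝ → ℝ) (f x)) =
        {x | f x ≠ 0}.indicator 1 := by
      ext x
      by_cases h : f x = 0 <;> simp [h]
    rw [h_comp]
    exact integral_indicator_one (hf (measurableSet_singleton 0).compl)
  rw [← h_limit]
  refine tendsto_integral_filter_of_dominated_convergence (fun _ => max C 1)
    (Eventually.of_forall fun n => (hf.pow_const _).aestronglyMeasurable) ?_
    (integrable_const _) (Eventually.of_forall fun x => Real.tendsto_rpow_inv_natCast_indicator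
      (hf_nonneg x))
  filter_upwards [eventually_ge_atTop 1] with n hn
  filter_upwards [hf_le] with x hx
  rw [Real.norm_of_nonneg (Real.rpow_nonneg (hf_nonneg x) _)]
  exact Real.rpow_le_max_one (hf_nonneg x) hx (by positivity) (inv_le_one_of_one_le₀ (mod_cast hn))

open MeasureTheory in
theorem dimension_function_eq_measure_support_general (A : Type*) [CStarAlgebra A]
    (τ : A →L[ℂ] ℂ)
    (a : A)
    (μ : Measure ℝ) [IsFiniteMeasure μ]
    (hsupp : μ ((spectrum ℝ a \ {0})ᶜ) = 0)
    (hrep : ∀ f : ℝ → ℝ, Continuous f → f 0 = 0 →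
      τ (cfc f a) = ((∫ t, f t ∂μ : ℝ) : ℂ))
    (f : ℝ → ℝ) (hf : Continuous f) (hf0 : f 0 = 0) (hfpos : ∀ t, 0 ≤ f t) :
    Filter.Tendsto (fun n : ℕ => τ (cfc (fun t : ℝ => f t ^ ((n : ℝ)⁻¹)) a))
      Filter.atTop (nhds (((μ {t | f t ≠ 0}).toReal : ℝ) : ℂ)) := by
  obtain ⟨C, hC⟩ := ((spectrum.isCompact a).image hf).bddAbove
  have hf_le : ∀ᵐ t ∂μ, f t ≤ C := by
    filter_upwards [mem_ae_iff.mpr hsupp] with t ht using hC ⟨t, ht.1, rfl⟩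
  have h_integral := tendsto_integral_rpow_inv_natCast hf.measurable hfpos hf_le
  refine ((Complex.continuous_ofReal.tendsto _).comp h_integral).congr' ?_
  filter_upwards [eventually_ge_atTop 1] with n hn
  refine (hrep _ (hf.rpow_const fun _ => Or.inr (by positivity)) ?_).symm
  simp only [hf0, Real.zero_rpow (by positivity : (n : ℝ)⁻¹ ≠ 0)]

open MeasureTheory in
/-- If `μ` is the Radon measure on the (punctured) spectrum of a positive element `a`
representing `f ↦ τ(f(a))`, then for every nonnegative `f ∈ C₀(X ∖ {0})` the dimension
function `d_τ([f(a)]) = lim_n τ(f(a)^{1/n})` equals `μ(supp f)`. -/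
theorem dimension_function_eq_measure_support (A : Type*) [CStarAlgebra A]
    [PartialOrder A] [StarOrderedRing A]
    (τ : A →L[ℂ] ℂ) (hτ1 : τ 1 = 1) (htrace : ∀ a b : A, τ (a * b) = τ (b * a))
    (hpos : ∀ a : A, 0 ≤ (τ (star a * a)).re ∧ (τ (star a * a)).im = 0)
    (a : A) (ha : 0 ≤ a)
    (μ : Measure ℝ) [IsFiniteMeasure μ]
    (hsupp : μ ((spectrum ℝ a \ {0})ᶜ) = 0)
    (hrep : ∀ f : ℝ → ℝ, Continuous f → f 0 = 0 →
      τ (cfc f a) = ((∫ t, f t ∂μ : ℝ) : ℂ))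
    (f : ℝ → ℝ) (hf : Continuous f) (hf0 : f 0 = 0) (hfpos : ∀ t, 0 ≤ f t) :
    Filter.Tendsto (fun n : ℕ => τ (cfc (fun t : ℝ => f t ^ ((n : ℝ)⁻¹)) a))
      Filter.atTop (nhds (((μ {t | f t ≠ 0}).toReal : ℝ) : ℂ)) :=
  dimension_function_eq_measure_support_general A τ a μ hsupp hrep f hf hf0 hfpos
end

section
/- Let X be a compact topological space and f₁,…,f_p : X → ℕ bounded lower semicontinuous functions. Then there exist finitely many open sets T₁,…,T_m whose closures cover X such that each restriction f_i|_{T_l} is constant; concretely, for each tuple (l₁,…,l_p) with 0 ≤ l_i ≤ max f_i, the set T = ∩_i int(W^i_{l_i−1} ∖ W^i_{l_i}) (with W^i_n = f_i⁻¹((n−1,∞]) and W^i₀ := int(X ∖ W^i₁)) is open, f_i equals l_i on T, and the closures of all such T cover X. -/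
/-- For finitely many bounded lower semicontinuous `ℕ`-valued functions on a compact
space, there are finitely many open sets whose closures cover the space and on each of
which every one of the functions is constant. -/
theorem exists_closed_cover_constant (X : Type*) [TopologicalSpace X] [CompactSpace X]
    (p : ℕ) (f : Fin p → X → ℕ)
    (hlsc : ∀ i, LowerSemicontinuous (f i)) (d : ℕ) (hbdd : ∀ i x, f i x ≤ d) :
    ∃ (m : ℕ) (T : Fin m → Set X),
      (∀ l, IsOpen (T l)) ∧ (⋃ l, closure (T l)) = Set.univ ∧
      ∀ l i, ∃ c : ℕ, ∀ x ∈ T l, f i x = c := by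
  classical
  set S : (Fin p → Fin (d + 1)) → Set X :=
    fun c => ⋂ i, interior {x | f i x = (c i : ℕ)} with hS
  have hSopen : ∀ c, IsOpen (S c) := fun c =>
    isOpen_iInter_of_finite fun i => isOpen_interior
  have hSconst : ∀ c i, ∀ x ∈ S c, f i x = (c i : ℕ) := by
    intro c i x hx
    have hx' := Set.mem_iInter.mp hx i
    have hx2 : x ∈ {x | f i x = (c i : ℕ)} := interior_subset hx'
    exact hx2
  have hcover : (⋃ c, closure (S c)) = Set.univ := by
    by_contra h
    set V := (⋃ c, closure (S c))ᶜ with hVdef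
    have hV : V.Nonempty := by
      rw [hVdef, Set.nonempty_compl]; exact h
    have hVopen : IsOpen V := by
      rw [hVdef, isOpen_compl_iff]
      exact isClosed_iUnion_of_finite fun c => isClosed_closure
    set A := (fun y => ∑ i, f i y) '' V with hA
    have hAne : A.Nonempty := hV.image _
    have hAbdd : BddAbove A := by
      refine ⟨p * d, ?_⟩
      rintro n ⟨y, -, rfl⟩
      calc ∑ i, f i y ≤ ∑ _i : Fin p, d := Finset.sum_le_sum fun i _ => hbdd i y
        _ = p * d := by simp [Finset.sum_const, mul_comm]
    obtain ⟨y, hyV, hysum⟩ := Nat.sSup_mem hAne hAbdd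
    have hev : ∀ᶠ z in nhds y, ∀ i, f i y ≤ f i z := by
      rw [Filter.eventually_all]
      intro i
      rcases Nat.eq_zero_or_pos (f i y) with h0 | hpos
      · exact Filter.Eventually.of_forall fun z => by omega
      · have := hlsc i y (f i y - 1) (by omega)
        exact this.mono fun z hz => by omega
    obtain ⟨U, hUsub, hUopen, hyU⟩ := eventually_nhds_iff.mp hev
    have hle : ∀ z ∈ U ∩ V, ∀ i, f i y ≤ f i z := fun z hz => hUsub z hz.1
    have heq : ∀ z ∈ U ∩ V, ∀ i, f i z = f i y := by
      intro z hz i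
      have h1 : ∑ j, f j y ≤ ∑ j, f j z := Finset.sum_le_sum fun j _ => hle z hz j
      have h2 : ∑ j, f j z ≤ sSup A := le_csSup hAbdd ⟨z, hz.2, rfl⟩
      have hysum' : ∑ j, f j y = sSup A := hysum
      have h3 : ∑ j, f j y = ∑ j, f j z := le_antisymm h1 (by rw [hysum']; exact h2)
      exact ((Finset.sum_eq_sum_iff_of_le fun j _ => hle z hz j).mp h3 i
        (Finset.mem_univ i)).symm
    set c : Fin p → Fin (d + 1) := fun i => ⟨f i y, Nat.lt_succ_of_le (hbdd i y)⟩ with hc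
    have hyS : y ∈ S c := by
      refine Set.mem_iInter.mpr fun i => ?_
      exact interior_maximal (fun z hz => heq z hz i) (hUopen.inter hVopen) ⟨hyU, hyV⟩
    exact hyV (Set.mem_iUnion.mpr ⟨c, subset_closure hyS⟩)
  let e := Fintype.equivFin (Fin p → Fin (d + 1))
  refine ⟨Fintype.card (Fin p → Fin (d + 1)), fun l => S (e.symm l),
    fun l => hSopen _, ?_, ?_⟩
  · rw [← hcover]
    exact e.symm.surjective.iUnion_comp fun c => closure (S c)
  · intro l i
    exact ⟨(e.symm l i : ℕ), fun x hx => hSconst _ i x hx⟩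
end
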